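/- Let F = (ℝ^m; f_1, …, f_N) be an affine IFS that is non-antipodal with respect to a convex body K. Then F is hyperbolic: there exists a metric d on ℝ^m, Lipschitz equivalent to the Euclidean metric, and α ∈ [0,1), such that d(f_n(x), f_n(y)) ≤ α d(x,y) for all x,y and all n. In fact one may take d to be the Minkowski metric of the centrally symmetric convex body K − K. -/

import Mathlib

open scoped Pointwise

/-- The Minkowski gauge of a set `K`. -/
noncomputable def minkowskiGauge {m : ℕ} (K : Set (EuclideanSpace ℝ (Fin m)))
    (x : EuclideanSpace ℝ (Fin m)) : ℝ :=
  sInf {l : ℝ | 0 ≤ l ∧ x ∈ l • K}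

/-- `(p, q)` is an antipodal pair of the convex body `K`. -/
def IsAntipodalPair {m : ℕ} (K : Set (EuclideanSpace ℝ (Fin m)))
    (p q : EuclideanSpace ℝ (Fin m)) : Prop :=
  p ∈ frontier K ∧ q ∈ frontier K ∧
    ∃ u : EuclideanSpace ℝ (Fin m), ‖u‖ = 1 ∧
      (∀ x ∈ K, inner ℝ x u ≤ (inner ℝ p u : ℝ)) ∧
      (∀ x ∈ K, (inner ℝ q u : ℝ) ≤ inner ℝ x u)

/-!
Let `B = K - K` and let `‖·‖_B` be its gauge. A point `v` with `‖v‖_B = 1` lies on the frontier of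
`B`, so `v = p - q` with `p, q ∈ K` maximising and minimising a common linear functional on `K`,
i.e. `(p, q)` is an antipodal pair. For an affine `f` with linear part `L` and `f(K) ⊆ K`,
`L v = f p - f q ∈ B` is not on the frontier of `B`, since `(f p, f q)` is not antipodal; hence
`‖L v‖_B < 1`. By compactness of the unit sphere of `‖·‖_B` this gives `‖L v‖_B ≤ α ‖v‖_B` for
some `α < 1`, uniformly over the finitely many maps. Finally `B` is a compact neighbourhood of `0`,
so `‖·‖_B` is equivalent to the Euclidean norm.
-/

open Set Filter Topology
open scoped RealInnerProductSpace

theorem IsCompact.exists_lt_forall_le {X : Type*} [TopologicalSpace X] {S : Set X}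
    (hS : IsCompact S) {g : X → ℝ} (hg : ContinuousOn g S) {c : ℝ} (h : ∀ x ∈ S, g x < c) :
    ∃ a < c, ∀ x ∈ S, g x ≤ a := by
  rcases S.eq_empty_or_nonempty with rfl | hne
  · exact ⟨c - 1, by linarith, by simp⟩
  obtain ⟨x₀, hx₀, hmax⟩ := hS.exists_isMaxOn hne hg
  exact ⟨g x₀, h x₀ hx₀, hmax⟩

theorem IsCompact.sub {G : Type*} [TopologicalSpace G] [AddGroup G] [IsTopologicalAddGroup G]
    {s t : Set G} (hs : IsCompact s) (ht : IsCompact t) : IsCompact (s - t) :=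
  sub_eq_add_neg s t ▸ hs.add ht.neg

theorem sub_self_mem_nhds_zero {G : Type*} [TopologicalSpace G] [AddGroup G]
    [IsTopologicalAddGroup G] {K : Set G} (hK : (interior K).Nonempty) : K - K ∈ 𝓝 0 := by
  obtain ⟨a, ha⟩ := hK
  have hnhds : ∀ᶠ y in 𝓝 (0 : G), y + a ∈ K :=
    (continuous_add_const a).tendsto' 0 a (zero_add a)
      |>.eventually (mem_interior_iff_mem_nhds.1 ha)
  filter_upwards [hnhds] with y hy
  simpa using sub_mem_sub hy (interior_subset ha)

section InnerProductSpace

variable {E : Type*} [NormedAddCommGroup E] [InnerProductSpace ℝ E]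

theorem notMem_interior_of_forall_inner_le {s : Set E} {p u : E} (hu : u ≠ 0)
    (h : ∀ y ∈ s, ⟪y, u⟫ ≤ ⟪p, u⟫) : p ∉ interior s := by
  intro hp
  have hline : ∀ᶠ t : ℝ in 𝓝[>] 0, p + t • u ∈ s := by
    refine nhdsWithin_le_nhds ?_
    exact (Continuous.tendsto' (by fun_prop) 0 p (by simp)).eventually
      (mem_interior_iff_mem_nhds.1 hp)
  obtain ⟨t, hts, ht⟩ := (hline.and self_mem_nhdsWithin).exists
  have hgain : 0 < t * ⟪u, u⟫ := mul_pos ht (real_inner_self_pos.2 hu)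
  have := h _ hts
  rw [inner_add_left, real_inner_smul_left] at this
  linarith

theorem Convex.exists_forall_inner_le_of_mem_frontier [CompleteSpace E] {s : Set E}
    (hs : Convex ℝ s) (hint : (interior s).Nonempty) {x : E} (hx : x ∈ frontier s) :
    ∃ u : E, ‖u‖ = 1 ∧ ∀ y ∈ s, ⟪y, u⟫ ≤ ⟪x, u⟫ := by
  obtain ⟨f, hf0, hf⟩ := geometric_hahn_banach_of_nonempty_interior_point hs hx.2 hint
  set z := (InnerProductSpace.toDual ℝ E).symm f
  have hz : ∀ y, ⟪y, z⟫ = f y := fun y => by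
    rw [real_inner_comm]; exact InnerProductSpace.toDual_symm_apply
  have hz0 : z ≠ 0 := by simpa [z] using hf0
  refine ⟨‖z‖⁻¹ • z, norm_smul_inv_norm hz0, fun y hy => ?_⟩
  simp only [real_inner_smul_right, hz]
  exact mul_le_mul_of_nonneg_left (hf y hy) (by positivity)

end InnerProductSpace

section Gauge

variable {E : Type*} [NormedAddCommGroup E] [NormedSpace ℝ E]

theorem exists_mul_norm_le_gauge_le_mul_norm {s : Set E} (hs : Bornology.IsBounded s)
    (hs₀ : s ∈ 𝓝 0) :
    ∃ r R : ℝ, 0 < r ∧ r ≤ R ∧ ∀ x, r * ‖x‖ ≤ gauge s x ∧ gauge s x ≤ R * ‖x‖ := by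
  obtain ⟨ε, hε, hball⟩ := Metric.mem_nhds_iff.1 hs₀
  obtain ⟨ρ, hρ⟩ := hs.subset_closedBall 0
  have hρε : s ⊆ Metric.closedBall 0 (max ρ ε) :=
    hρ.trans (Metric.closedBall_subset_closedBall (le_max_left _ _))
  have hmax : 0 < max ρ ε := hε.trans_le (le_max_right _ _)
  refine ⟨(max ρ ε)⁻¹, ε⁻¹, inv_pos.2 hmax, inv_anti₀ hε (le_max_right _ _), fun x => ⟨?_, ?_⟩⟩
  · rw [inv_mul_eq_div]
    exact le_gauge_of_subset_closedBall (absorbent_nhds_zero hs₀) hmax.le hρε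
  · rw [inv_mul_eq_div, le_div_iff₀' hε]
    exact mul_gauge_le_norm hball

/-- By homogeneity it suffices to bound `gauge s ∘ L` on the frontier of `s`, where `gauge s = 1`. -/
theorem exists_gauge_map_le_mul_gauge {s : Set E} (hc : Convex ℝ s) (hs : IsCompact s)
    (hs₀ : s ∈ 𝓝 0) (L : E →L[ℝ] E) (hL : ∀ v ∈ frontier s, gauge s (L v) < 1) :
    ∃ a < 1, ∀ v, gauge s (L v) ≤ a * gauge s v := by
  have hfr : IsCompact (frontier s) :=
    hs.of_isClosed_subset isClosed_frontier hs.isClosed.frontier_subset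
  obtain ⟨a, ha, hmax⟩ :=
    hfr.exists_lt_forall_le ((continuous_gauge hc hs₀).comp L.continuous).continuousOn hL
  refine ⟨a, ha, fun v => ?_⟩
  rcases (gauge_nonneg v).eq_or_lt with h0 | hpos
  · have hv : v = 0 := (gauge_eq_zero (absorbent_nhds_zero hs₀)
      (NormedSpace.isVonNBounded_of_isBounded ℝ hs.isBounded)).1 h0.symm
    simp [hv]
  set c := gauge s v
  have hunit : c⁻¹ • v ∈ frontier s := by
    rw [← gauge_eq_one_iff_mem_frontier hc hs₀, gauge_smul_of_nonneg (by positivity),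
      smul_eq_mul, inv_mul_cancel₀ hpos.ne']
  calc gauge s (L v) = c * gauge s (L (c⁻¹ • v)) := by
        rw [map_smul, gauge_smul_of_nonneg (by positivity), smul_eq_mul,
          mul_inv_cancel_left₀ hpos.ne']
    _ ≤ c * a := mul_le_mul_of_nonneg_left (hmax _ hunit) hpos.le
    _ = a * c := mul_comm c a

end Gauge

section ConvexBody

variable {m : ℕ} {K : Set (EuclideanSpace ℝ (Fin m))}

theorem minkowskiGauge_eq_gauge (hK : K.Nonempty) : minkowskiGauge K = gauge K := by
  ext x
  rcases eq_or_ne x 0 with rfl | hx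
  · rw [gauge_zero]
    refine IsLeast.csInf_eq ⟨⟨le_rfl, ?_⟩, fun l hl => hl.1⟩
    simp [zero_smul_set hK]
  · unfold minkowskiGauge gauge
    congr 1
    ext l
    refine ⟨fun ⟨hl, hxl⟩ => ⟨hl.lt_of_ne ?_, hxl⟩, fun ⟨hl, hxl⟩ => ⟨hl.le, hxl⟩⟩
    rintro rfl
    simp [zero_smul_set hK, hx] at hxl

theorem isAntipodalPair_of_sub_mem_frontier (hK : Convex ℝ K) (hint : (interior (K - K)).Nonempty)
    {p q : EuclideanSpace ℝ (Fin m)} (hp : p ∈ K) (hq : q ∈ K) (hpq : p - q ∈ frontier (K - K)) :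
    IsAntipodalPair K p q := by
  obtain ⟨u, hu, hsupp⟩ := (hK.sub hK).exists_forall_inner_le_of_mem_frontier hint hpq
  have hu0 : u ≠ 0 := by rintro rfl; simp at hu
  have hmax : ∀ x ∈ K, ⟪x, u⟫ ≤ ⟪p, u⟫ := fun x hx => by
    have := hsupp _ (sub_mem_sub hx hq)
    rw [inner_sub_left, inner_sub_left] at this
    linarith
  have hmin : ∀ x ∈ K, ⟪q, u⟫ ≤ ⟪x, u⟫ := fun x hx => by
    have := hsupp _ (sub_mem_sub hp hx)
    rw [inner_sub_left, inner_sub_left] at this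
    linarith
  have hmax' : ∀ x ∈ K, ⟪x, -u⟫ ≤ ⟪q, -u⟫ := fun x hx => by
    simpa only [inner_neg_right, neg_le_neg_iff] using hmin x hx
  exact ⟨⟨subset_closure hp, notMem_interior_of_forall_inner_le hu0 hmax⟩,
    ⟨subset_closure hq, notMem_interior_of_forall_inner_le (neg_ne_zero.2 hu0) hmax'⟩,
    u, hu, hmax, hmin⟩

theorem gauge_sub_lt_one_of_not_isAntipodalPair (hK : Convex ℝ K) (hK₀ : K - K ∈ 𝓝 0)
    {p q : EuclideanSpace ℝ (Fin m)} (hp : p ∈ K) (hq : q ∈ K) (h : ¬ IsAntipodalPair K p q) :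
    gauge (K - K) (p - q) < 1 := by
  refine (gauge_le_one_of_mem (sub_mem_sub hp hq)).lt_of_ne fun h1 => h ?_
  exact isAntipodalPair_of_sub_mem_frontier hK ⟨0, mem_interior_iff_mem_nhds.2 hK₀⟩ hp hq
    ((gauge_eq_one_iff_mem_frontier (hK.sub hK) hK₀).1 h1)

theorem gauge_linear_lt_one_of_mem_frontier (hKc : IsCompact K) (hK : Convex ℝ K)
    (hK₀ : K - K ∈ 𝓝 0)
    (g : EuclideanSpace ℝ (Fin m) →ᵃ[ℝ] EuclideanSpace ℝ (Fin m)) (hgK : g '' K ⊆ K)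
    (hna : ∀ x y, IsAntipodalPair K x y → ¬ IsAntipodalPair K (g x) (g y))
    {v : EuclideanSpace ℝ (Fin m)} (hv : v ∈ frontier (K - K)) :
    gauge (K - K) (g.linear v) < 1 := by
  obtain ⟨p, hp, q, hq, rfl⟩ := mem_sub.1 ((hKc.sub hKc).isClosed.frontier_subset hv)
  rw [← vsub_eq_sub, g.linearMap_vsub p q]
  exact gauge_sub_lt_one_of_not_isAntipodalPair hK hK₀ (hgK ⟨p, hp, rfl⟩) (hgK ⟨q, hq, rfl⟩)
    (hna p q (isAntipodalPair_of_sub_mem_frontier hK ⟨0, mem_interior_iff_mem_nhds.2 hK₀⟩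
      hp hq hv))

end ConvexBody

theorem non_antipodal_implies_hyperbolic (m N : ℕ)
    (f : Fin N → EuclideanSpace ℝ (Fin m) → EuclideanSpace ℝ (Fin m))
    (hf_affine : ∀ n, ∃ g : EuclideanSpace ℝ (Fin m) →ᵃ[ℝ] EuclideanSpace ℝ (Fin m),
      f n = g)
    (K : Set (EuclideanSpace ℝ (Fin m)))
    (hKc : IsCompact K) (hKconv : Convex ℝ K) (hKint : (interior K).Nonempty)
    (hinv : ∀ n, f n '' K ⊆ K)
    (hna : ∀ n, ∀ x y, IsAntipodalPair K x y → ¬ IsAntipodalPair K (f n x) (f n y)) :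
    (∃ r R : ℝ, 0 < r ∧ r ≤ R ∧ ∀ x y : EuclideanSpace ℝ (Fin m),
        r * dist x y ≤ minkowskiGauge (K - K) (x - y) ∧
        minkowskiGauge (K - K) (x - y) ≤ R * dist x y) ∧
    ∃ α : ℝ, 0 ≤ α ∧ α < 1 ∧ ∀ (n : Fin N) (x y : EuclideanSpace ℝ (Fin m)),
      minkowskiGauge (K - K) (f n x - f n y) ≤ α * minkowskiGauge (K - K) (x - y) := by
  have hK : K.Nonempty := hKint.mono interior_subset
  have hB₀ : K - K ∈ 𝓝 0 := sub_self_mem_nhds_zero hKint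
  have hBc : IsCompact (K - K) := hKc.sub hKc
  rw [minkowskiGauge_eq_gauge (hK.sub hK)]
  obtain ⟨r, R, hr, hrR, hequiv⟩ := exists_mul_norm_le_gauge_le_mul_norm hBc.isBounded hB₀
  refine ⟨⟨r, R, hr, hrR, fun x y => dist_eq_norm x y ▸ hequiv (x - y)⟩, ?_⟩
  choose g hg using hf_affine
  obtain rfl : f = fun n => ⇑(g n) := funext hg
  have hcontract (n : Fin N) :
      ∃ a < 1, ∀ v, gauge (K - K) ((g n).linear v) ≤ a * gauge (K - K) v :=
    exists_gauge_map_le_mul_gauge (hKconv.sub hKconv) hBc hB₀ (g n).linear.toContinuousLinearMap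
      fun v hv => gauge_linear_lt_one_of_mem_frontier hKc hKconv hB₀ (g n) (hinv n) (hna n) hv
  choose a ha hle using hcontract
  obtain ⟨α, hα, haα⟩ := (Set.finite_univ (α := Fin N)).isCompact.exists_lt_forall_le
    continuous_of_discreteTopology.continuousOn fun n _ => ha n
  refine ⟨max α 0, le_max_right _ _, max_lt hα one_pos, fun n x y => ?_⟩
  calc gauge (K - K) (g n x - g n y) = gauge (K - K) ((g n).linear (x - y)) :=
        congrArg _ ((g n).linearMap_vsub x y).symm
    _ ≤ a n * gauge (K - K) (x - y) := hle n _
    _ ≤ max α 0 * gauge (K - K) (x - y) := by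
        gcongr
        · exact gauge_nonneg _
        · exact (haα n trivial).trans (le_max_left _ _)
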